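/- Let A, B be n×n positive definite complex matrices with 0 < m·I ≤ A⁻¹, B⁻¹ ≤ M·I (0 < m ≤ M) and v ∈ [0,1]. Then Mm·((1−v)A + vB) + ((1−v)A⁻¹ + vB⁻¹) ≤ (M + m)·I in the Loewner order. -/

import Mathlib

open Matrix
open scoped ComplexOrder

noncomputable section
namespace Paper

variable {n : ℕ}

/-- Real part `(A + Aᴴ)/2`. -/
def re (A : Matrix (Fin n) (Fin n) ℂ) : Matrix (Fin n) (Fin n) ℂ := (2⁻¹ : ℂ) • (A + Aᴴ)

/-- Imaginary part `(A - Aᴴ)/(2i)`. -/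
def im (A : Matrix (Fin n) (Fin n) ℂ) : Matrix (Fin n) (Fin n) ℂ :=
  (2 * Complex.I)⁻¹ • (A - Aᴴ)

/-- The sector `S_α`. -/
def sector (α : ℝ) : Set ℂ := {z | 0 < z.re ∧ |z.im| ≤ z.re * Real.tan α}

/-- Numerical range of a matrix. -/
def numericalRange (A : Matrix (Fin n) (Fin n) ℂ) : Set ℂ :=
  {z | ∃ x : Fin n → ℂ, star x ⬝ᵥ x = 1 ∧ z = star x ⬝ᵥ (A *ᵥ x)}

/-- Loewner order: `X ≤ Y` iff `Y - X` is positive semidefinite. -/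
def loewnerLE (X Y : Matrix (Fin n) (Fin n) ℂ) : Prop := (Y - X).PosSemidef

lemma re_isHermitian (A : Matrix (Fin n) (Fin n) ℂ) : (re A).IsHermitian := by
  show ((2⁻¹ : ℂ) • (A + Aᴴ))ᴴ = (2⁻¹ : ℂ) • (A + Aᴴ)
  rw [Matrix.conjTranspose_smul, Matrix.conjTranspose_add,
    Matrix.conjTranspose_conjTranspose, add_comm Aᴴ A]
  simp

/-- The `j`-th largest element of `v` (descending sort). -/
def nthLargest (v : Fin n → ℝ) (j : Fin n) : ℝ :=
  ((List.ofFn v).mergeSort (fun a b => decide (b ≤ a))).get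
    (Fin.cast (by simp) j)

/-- `j`-th largest eigenvalue of a Hermitian matrix. -/
def eigDesc {A : Matrix (Fin n) (Fin n) ℂ} (hA : A.IsHermitian) (j : Fin n) : ℝ :=
  nthLargest hA.eigenvalues j

/-- `j`-th largest singular value. -/
def singular (A : Matrix (Fin n) (Fin n) ℂ) (j : Fin n) : ℝ :=
  nthLargest (fun i => Real.sqrt ((Matrix.isHermitian_conjTranspose_mul_self A).eigenvalues i)) j

/-- Square root of a positive semidefinite matrix (the former `Matrix.PosSemidef.sqrt`). -/
def posSemidefSqrt {A : Matrix (Fin n) (Fin n) ℂ} (hA : A.PosSemidef) : Matrix (Fin n) (Fin n) ℂ :=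
  (hA.1.eigenvectorUnitary : Matrix (Fin n) (Fin n) ℂ) *
    diagonal ((↑) ∘ (Real.sqrt ·) ∘ hA.1.eigenvalues) *
    (star hA.1.eigenvectorUnitary : Matrix (Fin n) (Fin n) ℂ)

/-- Weighted geometric mean of positive definite matrices. -/
def sharp (v : ℝ) {A B : Matrix (Fin n) (Fin n) ℂ} (hA : A.PosDef) (hB : B.PosDef) :
    Matrix (Fin n) (Fin n) ℂ :=
  posSemidefSqrt hA.posSemidef *
    (Matrix.isHermitian_mul_mul_conjTranspose (posSemidefSqrt hA.posSemidef)⁻¹ hB.1).cfc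
      (fun x => Real.rpow x v) * posSemidefSqrt hA.posSemidef

/-- Weighted arithmetic mean. -/
def arith (v : ℝ) (A B : Matrix (Fin n) (Fin n) ℂ) : Matrix (Fin n) (Fin n) ℂ :=
  (1 - v) • A + v • B

/-- Weighted harmonic mean. -/
def harm (v : ℝ) (A B : Matrix (Fin n) (Fin n) ℂ) : Matrix (Fin n) (Fin n) ℂ :=
  ((1 - v) • A⁻¹ + v • B⁻¹)⁻¹

/-- Kantorovich constant. -/
def K (h : ℝ) : ℝ := (h + 1) ^ 2 / (4 * h)

/-! For `m • 1 ≤ X ≤ M • 1` the spectrum of `X` lies in `[m, M]`, where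
`x + M m / x = M + m - (M - x) (x - m) / x ≤ M + m`; the functional calculus turns this scalar
inequality into `X + M m X⁻¹ ≤ (M + m) • 1`. Applied to `X = A⁻¹` and `X = B⁻¹`, the left-hand
side of the theorem is the `v`-convex combination of the two resulting bounds. -/

section ContinuousFunctionalCalculus

variable {A : Type*} [Ring A] [StarRing A] [TopologicalSpace A] [PartialOrder A]
  [StarOrderedRing A] [Algebra ℝ A] [StarModule ℝ A]
  [ContinuousFunctionalCalculus ℝ A IsSelfAdjoint] [NonnegSpectrumClass ℝ A]

theorem add_smul_ringInverse_le {a : A} {m M : ℝ} (hm : 0 < m)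
    (hma : algebraMap ℝ A m ≤ a) (haM : a ≤ algebraMap ℝ A M) :
    a + (M * m) • Ring.inverse a ≤ algebraMap ℝ A (M + m) := by
  have ha : IsSelfAdjoint a := by
    simpa using (sub_nonneg.2 hma).isSelfAdjoint.add (IsSelfAdjoint.algebraMap A (.all m))
  have hspec : ∀ x ∈ spectrum ℝ a, m ≤ x ∧ x ≤ M := fun x hx =>
    ⟨(algebraMap_le_iff_le_spectrum ha).1 hma x hx, (le_algebraMap_iff_spectrum_le ha).1 haM x hx⟩
  have hne : ∀ x ∈ spectrum ℝ a, x ≠ 0 := fun x hx => (hm.trans_le (hspec x hx).1).ne'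
  have hunit : IsUnit a := (spectrum.zero_notMem_iff ℝ).1 fun h => hne 0 h rfl
  have hinv : ContinuousOn (fun x : ℝ => x⁻¹) (spectrum ℝ a) := continuousOn_inv₀.mono hne
  have hcfc : a + (M * m) • Ring.inverse a = cfc (fun x => x + M * m * x⁻¹) a := by
    rw [cfc_add .., cfc_const_mul .., cfc_id' ℝ a, cfc_ringInverse_id a hunit]
  rw [hcfc, cfc_le_algebraMap_iff _ _ a (by fun_prop)]
  intro x hx
  obtain ⟨hmx, hxM⟩ := hspec x hx
  calc x + M * m * x⁻¹ = M + m - (M - x) * (x - m) / x := by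
        field_simp [(hm.trans_le hmx).ne']
        ring
    _ ≤ M + m := sub_le_self _ <|
        div_nonneg (mul_nonneg (sub_nonneg.2 hxM) (sub_nonneg.2 hmx)) (hm.trans_le hmx).le

end ContinuousFunctionalCalculus

open scoped MatrixOrder

theorem Matrix.add_smul_inv_le {𝕜 ι : Type*} [RCLike 𝕜] [Fintype ι] [DecidableEq ι]
    {X : Matrix ι ι 𝕜} {m M : ℝ} (hm : 0 < m) (hmX : m • 1 ≤ X) (hXM : X ≤ M • 1) :
    X + (M * m) • X⁻¹ ≤ (M + m) • 1 := by
  simp only [← Algebra.algebraMap_eq_smul_one, Matrix.nonsing_inv_eq_ringInverse] at hmX hXM ⊢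
  exact add_smul_ringInverse_le hm hmX hXM

theorem weighted_sum_le_general (A B : Matrix (Fin n) (Fin n) ℂ) (hA : A.PosDef) (hB : B.PosDef)
    (v : ℝ) (hv : v ∈ Set.Icc 0 1) (m M : ℝ) (hm : 0 < m)
    (hA1 : loewnerLE (m • (1 : Matrix (Fin n) (Fin n) ℂ)) A⁻¹) (hA2 : loewnerLE A⁻¹ (M • 1))
    (hB1 : loewnerLE (m • (1 : Matrix (Fin n) (Fin n) ℂ)) B⁻¹) (hB2 : loewnerLE B⁻¹ (M • 1)) :
    loewnerLE ((M * m) • ((1 - v) • A + v • B) + ((1 - v) • A⁻¹ + v • B⁻¹))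
      ((M + m) • 1) := by
  have hA' := Matrix.add_smul_inv_le hm hA1 hA2
  have hB' := Matrix.add_smul_inv_le hm hB1 hB2
  rw [nonsing_inv_nonsing_inv A (A.isUnit_iff_isUnit_det.1 hA.isUnit)] at hA'
  rw [nonsing_inv_nonsing_inv B (B.isUnit_iff_isUnit_det.1 hB.isUnit)] at hB'
  have hsplit : (M * m) • ((1 - v) • A + v • B) + ((1 - v) • A⁻¹ + v • B⁻¹)
      = (1 - v) • (A⁻¹ + (M * m) • A) + v • (B⁻¹ + (M * m) • B) := by module
  rw [loewnerLE, ← Matrix.le_iff, hsplit]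
  exact convex_Iic ((M + m) • 1 : Matrix (Fin n) (Fin n) ℂ) hA' hB' (sub_nonneg.2 hv.2) hv.1
    (by ring)

theorem weighted_sum_le (A B : Matrix (Fin n) (Fin n) ℂ) (hA : A.PosDef) (hB : B.PosDef)
    (v : ℝ) (hv : v ∈ Set.Icc 0 1) (m M : ℝ) (hm : 0 < m) (hmM : m ≤ M)
    (hA1 : loewnerLE (m • (1 : Matrix (Fin n) (Fin n) ℂ)) A⁻¹) (hA2 : loewnerLE A⁻¹ (M • 1))
    (hB1 : loewnerLE (m • (1 : Matrix (Fin n) (Fin n) ℂ)) B⁻¹) (hB2 : loewnerLE B⁻¹ (M • 1)) :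
    loewnerLE ((M * m) • ((1 - v) • A + v • B) + ((1 - v) • A⁻¹ + v • B⁻¹))
      ((M + m) • 1) :=
  weighted_sum_le_general A B hA hB v hv m M hm hA1 hA2 hB1 hB2

end Paper
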